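/- arXiv:1911.02544 — 2 statements merged into one kernel-verified Lean document; each statement's English description precedes it below -/
import Mathlib

section
/- Let A be a Marot ISP-ring and let P ⊊ M be regular prime ideals of A. Then the image of P under the canonical map from A to the regular localization A_(M) is contained in the ideal M²A_(M) generated by the image of M². -/
/-- An ideal is *regular* if it contains a regular element (a non-zero-divisor). -/
def Ideal.IsRegularIdeal {A : Type*} [CommRing A] (I : Ideal A) : Prop :=
  ∃ a ∈ I, a ∈ nonZeroDivisors A

/-- An ideal is *invertible* if it is regular, finitely generated and locally principal. -/
def Ideal.IsInvertibleIdeal {A : Type*} [CommRing A] (J : Ideal A) : Prop :=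
  J.IsRegularIdeal ∧ J.FG ∧
    ∀ M : Ideal A, ∀ hM : M.IsMaximal,
      haveI := hM.isPrime
      (J.map (algebraMap A (Localization.AtPrime M))).IsPrincipal

/-- `I` can be written as an invertible ideal times a nonempty product of
proper radical ideals. -/
def Ideal.HasISPFactorization {A : Type*} [CommRing A] (I : Ideal A) : Prop :=
  ∃ (J : Ideal A) (L : List (Ideal A)), J.IsInvertibleIdeal ∧ L ≠ [] ∧
    (∀ H ∈ L, H ≠ ⊤ ∧ H.IsRadical) ∧ I = J * L.prod

/-- An ISP-ring: every proper regular ideal factors as an invertible ideal times a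
nonempty product of proper radical ideals. -/
def IsISPRing (A : Type*) [CommRing A] : Prop :=
  ∀ I : Ideal A, I ≠ ⊤ → I.IsRegularIdeal → I.HasISPFactorization

/-- A strongly ISP-ring: every proper ideal factors as an invertible ideal times a
nonempty product of proper radical ideals. -/
def IsStronglyISPRing (A : Type*) [CommRing A] : Prop :=
  ∀ I : Ideal A, I ≠ ⊤ → I.HasISPFactorization

/-- An ISP-domain: an integral domain in which every proper nonzero ideal factors as an
invertible ideal times a nonempty product of proper radical ideals. -/
def IsISPDomain (A : Type*) [CommRing A] : Prop :=
  IsDomain A ∧ ∀ I : Ideal A, I ≠ ⊤ → I ≠ ⊥ → I.HasISPFactorization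

/-- A Marot ring: every regular ideal is generated by the regular elements it contains. -/
def IsMarotRing (A : Type*) [CommRing A] : Prop :=
  ∀ I : Ideal A, I.IsRegularIdeal →
    I = Ideal.span ((I : Set A) ∩ (nonZeroDivisors A : Set A))

section ISPHelpers

variable {A : Type*} [CommRing A]

theorem algMap_mem_map_iff (S : Submonoid A) (B : Type*) [CommRing B] [Algebra A B]
    [IsLocalization S B] (K : Ideal A) (a : A) :
    algebraMap A B a ∈ K.map (algebraMap A B) ↔ ∃ s ∈ S, s * a ∈ K := by
  rw [← IsLocalization.mk'_one (M := S) B a, IsLocalization.mk'_mem_map_algebraMap_iff S B]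

theorem listProd_le_of_mem {L : List (Ideal A)} {H : Ideal A} (h : H ∈ L) : L.prod ≤ H := by
  induction L with
  | nil => simp at h
  | cons K L ih =>
    rw [List.prod_cons]
    rcases List.mem_cons.mp h with rfl | h'
    · exact Ideal.mul_le_left
    · exact le_trans Ideal.mul_le_right (ih h')

theorem map_listProd {B : Type*} [CommRing B] (f : A →+* B) (L : List (Ideal A)) :
    (L.prod).map f = (L.map (Ideal.map f)).prod := by
  induction L with
  | nil => simp [Ideal.one_eq_top, Ideal.map_top]
  | cons K L ih => rw [List.prod_cons, Ideal.map_mul, ih, List.map_cons, List.prod_cons]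

theorem list_tri {B : Type*} [CommRing B] (M' : Ideal B) (K : List (Ideal B))
    (h : ∀ H ∈ K, H = ⊤ ∨ H ≤ M') :
    K.prod = ⊤ ∨ K.prod ≤ M' ^ 2 ∨ ∃ H ∈ K, H ≤ M' ∧ K.prod = H := by
  induction K with
  | nil => left; simp [Ideal.one_eq_top]
  | cons H K ih =>
    have hK : ∀ H' ∈ K, H' = ⊤ ∨ H' ≤ M' := fun H' hH' => h H' (List.mem_cons_of_mem _ hH')
    rcases h H (List.mem_cons_self) with hT | hle
    · rw [List.prod_cons, hT, Ideal.top_mul]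
      rcases ih hK with h1 | h2 | ⟨H', hm, hle', he⟩
      · left; exact h1
      · right; left; exact h2
      · right; right; exact ⟨H', List.mem_cons_of_mem _ hm, hle', he⟩
    · rw [List.prod_cons]
      rcases ih hK with h1 | h2 | ⟨H', hm, hle', he⟩
      · right; right; exact ⟨H, List.mem_cons_self, hle, by rw [h1, Ideal.mul_top]⟩
      · right; left; exact le_trans Ideal.mul_le_right h2
      · right; left; rw [he, pow_two]; exact Ideal.mul_mono hle hle'

theorem algMap_nzd' (S : Submonoid A) (B : Type*) [CommRing B] [Algebra A B]
    [IsLocalization S B] {a : A} (ha : a ∈ nonZeroDivisors A) :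
    algebraMap A B a ∈ nonZeroDivisors B := by
  rw [mem_nonZeroDivisors_iff_right]
  intro z hz
  obtain ⟨⟨y, t⟩, hyt⟩ := IsLocalization.surj S z
  have h1 : algebraMap A B (a * y) = 0 := by
    rw [map_mul, ← hyt, ← mul_assoc, mul_comm (algebraMap A B a) z, hz, zero_mul]
  obtain ⟨c, hc⟩ := (IsLocalization.map_eq_zero_iff S B _).mp h1
  have h2 : (↑c * y) * a = 0 := by linear_combination hc
  have h3 : (↑c : A) * y = 0 := mem_nonZeroDivisors_iff_right.mp ha _ h2
  have h4 : algebraMap A B (↑c * y) = 0 := by rw [h3, map_zero]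
  rw [map_mul] at h4
  have h5 : algebraMap A B y = 0 :=
    ((IsLocalization.map_units B c).mul_right_eq_zero).mp h4
  rw [← hyt] at h5
  exact ((IsLocalization.map_units B t).mul_left_eq_zero).mp h5

theorem exists_regular_finset (hmarot : IsMarotRing A) {J : Ideal A} (hfg : J.FG)
    (hreg : J.IsRegularIdeal) :
    ∃ xs : Finset A, (∀ x ∈ xs, x ∈ J ∧ x ∈ nonZeroDivisors A) ∧ xs.Nonempty ∧
      Ideal.span ↑xs = J := by
  classical
  obtain ⟨a₀, ha₀J, ha₀r⟩ := hreg
  set T : Set A := (J : Set A) ∩ (nonZeroDivisors A : Set A) with hT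
  have hsp : J = Ideal.span T := hmarot J ⟨a₀, ha₀J, ha₀r⟩
  have hcomp := (Submodule.fg_iff_compact J).mp hfg
  have e1 : Ideal.span T = ⨆ x : T, Ideal.span {(x : A)} := by
    rw [iSup_subtype'' T fun t => Ideal.span {t}]
    exact Submodule.span_eq_iSup_of_singleton_spans T
  have hle : J ≤ ⨆ x : T, Ideal.span {(x : A)} := le_of_eq (hsp.trans e1)
  obtain ⟨s, hs⟩ := CompleteLattice.IsCompactElement.exists_finset_of_le_iSup (Ideal A) hcomp (fun x : T => Ideal.span {(x : A)}) hle
  refine ⟨insert a₀ (s.image (fun x => ((x : T) : A))), ?_, ⟨a₀, Finset.mem_insert_self _ _⟩, ?_⟩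
  · intro x hx
    rcases Finset.mem_insert.mp hx with rfl | hx
    · exact ⟨ha₀J, ha₀r⟩
    · obtain ⟨y, _, rfl⟩ := Finset.mem_image.mp hx
      exact ⟨(y : T).2.1, (y : T).2.2⟩
  · apply le_antisymm
    · rw [Ideal.span_le]
      intro x hx
      rcases Finset.mem_insert.mp hx with rfl | hx
      · exact ha₀J
      · obtain ⟨y, _, rfl⟩ := Finset.mem_image.mp hx
        exact (y : T).2.1
    · refine le_trans hs (le_trans ?_ (Ideal.span_mono (Finset.coe_subset.mpr
        (Finset.subset_insert _ _))))
      refine iSup₂_le fun x hx => ?_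
      rw [Ideal.span_singleton_le_iff_mem]
      exact Ideal.subset_span (Finset.mem_coe.mpr (Finset.mem_image.mpr ⟨x, hx, rfl⟩))

theorem key_principal (hmarot : IsMarotRing A) {J : Ideal A} (hJ : J.IsInvertibleIdeal)
    {M : Ideal A} (hMt : M ≠ ⊤) :
    ∃ x u : A, x ∈ J ∧ x ∈ nonZeroDivisors A ∧ u ∈ nonZeroDivisors A ∧ u ∉ M ∧
      ∀ z ∈ J, u * z ∈ Ideal.span {x} := by
  classical
  obtain ⟨hreg, hfg, hloc⟩ := hJ
  obtain ⟨xs, hxsJR, hne, hspan⟩ := exists_regular_finset hmarot hfg hreg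
  set C : A → Ideal A := fun x => Submodule.colon (Ideal.span {x}) J with hC
  have hxC : ∀ x ∈ xs, x ∈ C x := by
    intro x hx
    exact Submodule.mem_colon.mpr fun z hz => by
      rw [smul_eq_mul]
      exact Ideal.mul_mem_right z _ (Ideal.mem_span_singleton_self x)
  have hCtop : (⨆ x ∈ xs, C x) = ⊤ := by
    by_contra hne'
    obtain ⟨N, hNmax, hCN⟩ := Ideal.exists_le_maximal _ hne'
    haveI := hNmax.isPrime
    set B := Localization.AtPrime N with hB
    set g : A →+* B := algebraMap A B with hg
    obtain ⟨gg, hgg0⟩ := (hloc N hNmax).principal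
    have hgg : Ideal.map g J = Ideal.span {gg} := hgg0
    have hmap : J.map g = Ideal.span (⇑g '' ↑xs) := by rw [← hspan, Ideal.map_span]
    obtain ⟨x₀, hx₀⟩ := hne
    have hx₀J := hxsJR x₀ hx₀
    have hgx₀ : g x₀ ∈ Ideal.span {gg} := by rw [← hgg]; exact Ideal.mem_map_of_mem g hx₀J.1
    obtain ⟨c₀, hc₀⟩ := Ideal.mem_span_singleton'.mp hgx₀
    have hx₀reg : g x₀ ∈ nonZeroDivisors B := algMap_nzd' N.primeCompl B hx₀J.2
    have hggreg : gg ∈ nonZeroDivisors B := by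
      rw [mem_nonZeroDivisors_iff_right]
      intro w hw
      have h2 : w * g x₀ = 0 := by rw [← hc₀]; linear_combination c₀ * hw
      exact mem_nonZeroDivisors_iff_right.mp hx₀reg _ h2
    have hggmem : gg ∈ Ideal.span ↑(xs.image g) := by
      rw [Finset.coe_image, ← hmap, hgg]
      exact Ideal.mem_span_singleton_self gg
    obtain ⟨t, -, ht⟩ := Submodule.mem_span_finset.mp hggmem
    have hyex : ∀ z ∈ xs.image g, ∃ w, w * gg = z := by
      intro z hz
      have hz' : z ∈ J.map g := by
        rw [hmap, ← Finset.coe_image]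
        exact Ideal.subset_span hz
      rw [hgg] at hz'
      exact Ideal.mem_span_singleton'.mp hz'
    choose y hy using hyex
    have hsum : (∑ z ∈ xs.image g, if hz : z ∈ xs.image g then t z * y z hz else 0) * gg
        = gg := by
      rw [Finset.sum_mul]
      calc ∑ z ∈ xs.image g, (if hz : z ∈ xs.image g then t z * y z hz else 0) * gg
          = ∑ z ∈ xs.image g, t z • z := by
            refine Finset.sum_congr rfl fun z hz => ?_
            rw [dif_pos hz, smul_eq_mul, mul_assoc, hy z hz]
        _ = gg := ht
    have hone : (∑ z ∈ xs.image g, if hz : z ∈ xs.image g then t z * y z hz else 0)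
        = (1 : B) := by
      have h0 : ((∑ z ∈ xs.image g, if hz : z ∈ xs.image g then t z * y z hz else 0) - 1) * gg
          = 0 := by rw [sub_mul, hsum, one_mul, sub_self]
      have := mem_nonZeroDivisors_iff_right.mp hggreg _ h0
      exact sub_eq_zero.mp this
    have hex : ∃ z₀, ∃ hz₀mem : z₀ ∈ xs.image g,
        t z₀ * y z₀ hz₀mem ∉ IsLocalRing.maximalIdeal B := by
      by_contra h
      push_neg at h
      have h1 : (∑ z ∈ xs.image g, if hz : z ∈ xs.image g then t z * y z hz else 0)
          ∈ IsLocalRing.maximalIdeal B := by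
        refine Ideal.sum_mem _ fun z hz => ?_
        rw [dif_pos hz]
        exact h z hz
      simp only [hone] at h1
      exact ((Ideal.ne_top_iff_one _).mp (IsLocalRing.maximalIdeal.isMaximal B).ne_top) h1
    obtain ⟨z₀, hz₀mem, hz₀⟩ := hex
    have hv : IsUnit (t z₀ * y z₀ hz₀mem) := IsLocalRing.notMem_maximalIdeal.mp hz₀
    have hggz : gg ∈ Ideal.span {z₀} := by
      obtain ⟨v, hv'⟩ := hv
      refine Ideal.mem_span_singleton'.mpr ⟨↑v⁻¹ * t z₀, ?_⟩
      have h6 : gg * (t z₀ * y z₀ hz₀mem) = t z₀ * z₀ := by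
        linear_combination t z₀ * (hy z₀ hz₀mem)
      calc ↑v⁻¹ * t z₀ * z₀ = ↑v⁻¹ * (t z₀ * z₀) := by ring
        _ = ↑v⁻¹ * (gg * ↑v) := by rw [← h6, hv']
        _ = gg * (↑v⁻¹ * ↑v) := by ring
        _ = gg := by rw [Units.inv_mul, mul_one]
    obtain ⟨xj, hxjxs, hxjz⟩ := Finset.mem_image.mp hz₀mem
    have hmem : ∀ x ∈ xs, ∃ s ∈ N.primeCompl, s * x ∈ Ideal.span {xj} := by
      intro x hx
      have h1 : g x ∈ Ideal.span {z₀} := by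
        have h2 : g x ∈ J.map g := Ideal.mem_map_of_mem g (hxsJR x hx).1
        rw [hgg] at h2
        exact ((Ideal.span_singleton_le_iff_mem _).mpr hggz) h2
      have h2 : g x ∈ (Ideal.span {xj}).map g := by
        rwa [Ideal.map_span, Set.image_singleton, hxjz]
      exact (algMap_mem_map_iff N.primeCompl B _ x).mp h2
    choose sfun hsN hsx using hmem
    set u₀ := xs.prod (fun x => if hx : x ∈ xs then sfun x hx else 1) with hu₀
    have hu₀N : u₀ ∈ N.primeCompl := Submonoid.prod_mem _ fun x hx => by
      rw [dif_pos hx]; exact hsN x hx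
    have hu₀C : u₀ ∈ C xj := by
      refine Submodule.mem_colon'.mpr ?_
      rw [← hspan, SetLike.coe_subset_coe, Ideal.span_le]
      intro x hx
      have hx' : x ∈ xs := hx
      rw [SetLike.mem_coe, Submodule.mem_comap]
      simp only [LinearMap.smul_apply, LinearMap.id_apply, smul_eq_mul]
      rw [hu₀, ← Finset.mul_prod_erase _ _ hx', dif_pos hx', mul_right_comm]
      exact Ideal.mul_mem_right _ _ (hsx x hx')
    have hu₀CN : u₀ ∈ N := hCN ((le_biSup C hxjxs) hu₀C)
    exact hu₀N hu₀CN
  have hex : ∃ x ∈ xs, ∃ u, u ∈ C x ∧ u ∈ nonZeroDivisors A ∧ u ∉ M := by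
    by_contra h
    push_neg at h
    have hle : ∀ x ∈ xs, C x ≤ M := by
      intro x hx
      have hreg' : (C x).IsRegularIdeal := ⟨x, hxC x hx, (hxsJR x hx).2⟩
      have h2 := hmarot (C x) hreg'
      rw [h2, Ideal.span_le]
      rintro u ⟨huC, hur⟩
      exact h x hx u huC hur
    have h3 : (⊤ : Ideal A) ≤ M := hCtop ▸ iSup₂_le hle
    exact hMt (top_le_iff.mp h3)
  obtain ⟨x, hxxs, u, huC, hur, huM⟩ := hex
  exact ⟨x, u, (hxsJR x hxxs).1, (hxsJR x hxxs).2, hur, huM,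
    fun z hz => by have h := Submodule.mem_colon.mp huC z hz; rwa [smul_eq_mul] at h⟩


end ISPHelpers

/-- If `A` is a Marot ISP-ring and `P ⊊ M` are regular prime ideals, then the image of
`P` in the regular localization `A_(M)` is contained in `M² A_(M)`. -/
theorem regular_prime_le_sq_of_marot_isISPRing {A : Type*} [CommRing A]
    (hmarot : IsMarotRing A) (hisp : IsISPRing A)
    (P M : Ideal A) (hP : P.IsPrime) (hM : M.IsPrime) (hPM : P < M)
    (hPreg : P.IsRegularIdeal) (hMreg : M.IsRegularIdeal) :
    P.map (algebraMap A (Localization (nonZeroDivisors A ⊓ @Ideal.primeCompl A _ M hM))) ≤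
      (M ^ 2).map
        (algebraMap A (Localization (nonZeroDivisors A ⊓ @Ideal.primeCompl A _ M hM))) := by
  set S : Submonoid A := nonZeroDivisors A ⊓ @Ideal.primeCompl A _ M hM with hSdef
  set A' := Localization S with hA'def
  have hSmem : ∀ a : A, a ∈ nonZeroDivisors A → a ∉ M → a ∈ S :=
    fun a h1 h2 => Submonoid.mem_inf.mpr ⟨h1, h2⟩
  have hSnotM : ∀ a : A, a ∈ S → a ∉ M := fun a ha => (Submonoid.mem_inf.mp ha).2
  have hMtop : M ≠ ⊤ := hM.ne_top
  have hm : ∃ m, (m ∈ M ∧ m ∈ nonZeroDivisors A) ∧ m ∉ P := by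
    by_contra h
    push_neg at h
    have hMP : M ≤ P := by
      conv_lhs => rw [hmarot M hMreg]
      rw [Ideal.span_le]
      rintro x ⟨h1, h2⟩
      exact h x ⟨h1, h2⟩
    exact hPM.not_ge hMP
  obtain ⟨m, ⟨hmM, hmreg⟩, hmP⟩ := hm
  have hmm : ∀ (K : Ideal A) (a : A),
      algebraMap A A' a ∈ K.map (algebraMap A A') ↔ ∃ s ∈ S, s * a ∈ K :=
    fun K a => algMap_mem_map_iff S A' K a
  have hM'top : M.map (algebraMap A A') ≠ ⊤ := by
    intro h
    have h1 : algebraMap A A' 1 ∈ M.map (algebraMap A A') := by rw [h]; trivial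
    obtain ⟨s, hsS, hs⟩ := (hmm M 1).mp h1
    rw [mul_one] at hs
    exact hSnotM s hsS hs
  have hP'prime : (P.map (algebraMap A A')).IsPrime := by
    apply IsLocalization.isPrime_of_isPrime_disjoint S A' P hP
    rw [Set.disjoint_left]
    intro a haS haP
    exact hSnotM a haS (hPM.le haP)
  have hP'le : P.map (algebraMap A A') ≤ M.map (algebraMap A A') := Ideal.map_mono hPM.le
  have hmP' : algebraMap A A' m ∉ P.map (algebraMap A A') := by
    intro h
    obtain ⟨s, hsS, hs⟩ := (hmm P m).mp h
    rcases hP.mem_or_mem hs with h' | h'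
    · exact hSnotM s hsS (hPM.le h')
    · exact hmP h'
  have ext_le : ∀ K : Ideal A, K.IsRegularIdeal → K.map (algebraMap A A') ≠ ⊤ →
      K.map (algebraMap A A') ≤ M.map (algebraMap A A') := by
    intro K hKreg hKtop
    have h1 : (Ideal.comap (algebraMap A A') (K.map (algebraMap A A'))).IsRegularIdeal := by
      obtain ⟨a, haK, har⟩ := hKreg
      exact ⟨a, Ideal.le_comap_map haK, har⟩
    have h2 := hmarot _ h1
    have h3 : ((Ideal.comap (algebraMap A A') (K.map (algebraMap A A')) : Set A)
        ∩ (nonZeroDivisors A : Set A)) ⊆ (M : Set A) := by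
      rintro y ⟨hy1, hy2⟩
      by_contra hyM
      exact hKtop (Ideal.eq_top_of_isUnit_mem _ (Ideal.mem_comap.mp hy1)
        (IsLocalization.map_units A' ⟨y, hSmem y hy2 hyM⟩))
    calc K.map (algebraMap A A')
        = Ideal.map (algebraMap A A')
            (Ideal.comap (algebraMap A A') (K.map (algebraMap A A'))) :=
          (IsLocalization.map_comap S A' _).symm
      _ ≤ M.map (algebraMap A A') :=
          Ideal.map_mono (by rw [h2]; exact Ideal.span_le.mpr h3)
  conv_lhs => rw [hmarot P hPreg]
  rw [Ideal.map_span, Ideal.span_le]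
  rintro _ ⟨p, ⟨hpP, hpreg⟩, rfl⟩
  rw [SetLike.mem_coe, Ideal.map_pow]
  -- the ideal to factor
  set I : Ideal A := Ideal.span {p, m ^ 2} with hIdef
  have hpI : p ∈ I := Ideal.subset_span (Set.mem_insert _ _)
  have hm2I : m ^ 2 ∈ I := Ideal.subset_span (Set.mem_insert_of_mem _ rfl)
  have hIM : I ≤ M := by
    rw [hIdef, Ideal.span_le]
    rintro x hx
    simp only [Set.mem_insert_iff, Set.mem_singleton_iff] at hx
    rcases hx with rfl | rfl
    · exact hPM.le hpP
    · exact Ideal.pow_mem_of_mem M hmM 2 (by norm_num)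
  have hItop : I ≠ ⊤ := fun h => hMtop (top_le_iff.mp (h ▸ hIM))
  obtain ⟨J, L, hJinv, hLne, hLprop, hIfac⟩ := hisp I hItop ⟨p, hpI, hpreg⟩
  have hIJ : I ≤ J := le_of_eq_of_le hIfac Ideal.mul_le_left
  have hIH : ∀ H ∈ L, I ≤ H := fun H hH =>
    le_of_eq_of_le hIfac (le_trans Ideal.mul_le_right (listProd_le_of_mem hH))
  have hmH : ∀ H ∈ L, m ∈ H := fun H hH => (hLprop H hH).2 ⟨2, hIH H hH hm2I⟩
  have hI'top : I.map (algebraMap A A') ≠ ⊤ := by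
    intro h
    have h1 : algebraMap A A' 1 ∈ I.map (algebraMap A A') := by rw [h]; trivial
    obtain ⟨s, hsS, hs⟩ := (hmm I 1).mp h1
    rw [mul_one] at hs
    exact hSnotM s hsS (hIM hs)
  have hIfac' : I.map (algebraMap A A') =
      J.map (algebraMap A A') * (L.map (Ideal.map (algebraMap A A'))).prod := by
    rw [hIfac, Ideal.map_mul, map_listProd]
  have hKcase : ∀ H' ∈ L.map (Ideal.map (algebraMap A A')),
      H' = ⊤ ∨ H' ≤ M.map (algebraMap A A') := by
    intro H' hH'
    obtain ⟨H, hHL, rfl⟩ := List.mem_map.mp hH'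
    rcases eq_or_ne (H.map (algebraMap A A')) ⊤ with h | h
    · left; exact h
    · right; exact ext_le H ⟨p, hIH H hHL hpI, hpreg⟩ h
  rcases list_tri (M.map (algebraMap A A')) _ hKcase with hcase | hcase | ⟨H', hH'mem, hH'le, hH'eq⟩
  · -- all mapped radical factors trivialize : I' = J'
    have hIJ' : I.map (algebraMap A A') = J.map (algebraMap A A') := by
      rw [hIfac', hcase, Ideal.mul_top]
    obtain ⟨x, u, hxJ, hxreg, hureg, huM, hkey⟩ := key_principal hmarot hJinv hMtop
    have huunit : IsUnit (algebraMap A A' u) :=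
      IsLocalization.map_units A' ⟨u, hSmem u hureg huM⟩
    have hJ'le : J.map (algebraMap A A') ≤ M.map (algebraMap A A') := by
      rw [← hIJ']
      exact ext_le I ⟨p, hpI, hpreg⟩ hI'top
    have hfxM : algebraMap A A' x ∈ M.map (algebraMap A A') :=
      hJ'le (Ideal.mem_map_of_mem _ hxJ)
    have hspanle : ∀ w : A, w ∈ Ideal.span {x} →
        ∃ c : A', c * algebraMap A A' x = algebraMap A A' w := by
      intro w hw
      obtain ⟨c, hc⟩ := Ideal.mem_span_singleton'.mp hw
      exact ⟨algebraMap A A' c, by rw [← map_mul, hc]⟩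
    have hfxP : algebraMap A A' x ∉ P.map (algebraMap A A') := by
      intro hc
      obtain ⟨c, hc'⟩ := hspanle _ (hkey (m ^ 2) (hIJ hm2I))
      have h2 : algebraMap A A' (u * m ^ 2) ∈ P.map (algebraMap A A') := by
        rw [← hc']
        exact Ideal.mul_mem_left _ _ hc
      rw [map_mul, map_pow] at h2
      rcases hP'prime.mem_or_mem h2 with h3 | h3
      · exact hP'prime.ne_top (Ideal.eq_top_of_isUnit_mem _ h3 huunit)
      · exact hmP' (hP'prime.mem_of_pow_mem 2 h3)
    obtain ⟨c, hc⟩ := hspanle _ (hkey p (hIJ hpI))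
    have h4 : c * algebraMap A A' x ∈ P.map (algebraMap A A') := by
      rw [hc, map_mul]
      exact Ideal.mul_mem_left _ _ (Ideal.mem_map_of_mem _ hpP)
    have hcP : c ∈ P.map (algebraMap A A') := (hP'prime.mem_or_mem h4).resolve_right hfxP
    have h5 : algebraMap A A' u * algebraMap A A' p ∈ (M.map (algebraMap A A')) ^ 2 := by
      rw [← map_mul, ← hc, pow_two]
      exact Ideal.mul_mem_mul (hP'le hcP) hfxM
    rwa [Ideal.unit_mul_mem_iff_mem _ huunit] at h5
  · -- at least "two" proper factors
    have h1 : algebraMap A A' p ∈ I.map (algebraMap A A') := Ideal.mem_map_of_mem _ hpI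
    rw [hIfac'] at h1
    exact hcase (Ideal.mul_le_right h1)
  · -- exactly one proper radical factor
    obtain ⟨H, hHL, rfl⟩ := List.mem_map.mp hH'mem
    rcases eq_or_ne (J.map (algebraMap A A')) ⊤ with hJtop | hJtop
    · -- I' = H' leads to a contradiction
      exfalso
      have hIH' : I.map (algebraMap A A') = H.map (algebraMap A A') := by
        rw [hIfac', hJtop, hH'eq, Ideal.top_mul]
      have hfmI : algebraMap A A' m ∈ I.map (algebraMap A A') := by
        rw [hIH']
        exact Ideal.mem_map_of_mem _ (hmH H hHL)
      have hIspan : I.map (algebraMap A A') =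
          Ideal.span {algebraMap A A' p, algebraMap A A' (m ^ 2)} := by
        rw [hIdef, Ideal.map_span, Set.image_insert_eq, Set.image_singleton]
      rw [hIspan] at hfmI
      obtain ⟨a, b, hab⟩ := Ideal.mem_span_pair.mp hfmI
      rw [map_pow] at hab
      have h1 : algebraMap A A' m * (1 - b * algebraMap A A' m) = a * algebraMap A A' p := by
        linear_combination -hab
      have h2 : algebraMap A A' m * (1 - b * algebraMap A A' m) ∈ P.map (algebraMap A A') := by
        rw [h1]
        exact Ideal.mul_mem_left _ _ (Ideal.mem_map_of_mem _ hpP)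
      have h3 : (1 - b * algebraMap A A' m) ∈ P.map (algebraMap A A') :=
        (hP'prime.mem_or_mem h2).resolve_left hmP'
      have h5 : b * algebraMap A A' m ∈ M.map (algebraMap A A') :=
        Ideal.mul_mem_left _ _ (Ideal.mem_map_of_mem _ hmM)
      have h4 : (1 : A') ∈ M.map (algebraMap A A') := by
        have h6 := Ideal.add_mem _ (hP'le h3) h5
        rwa [sub_add_cancel] at h6
      exact hM'top ((Ideal.eq_top_iff_one _).mpr h4)
    · -- J' and H' both proper
      have hJle := ext_le J ⟨p, hIJ hpI, hpreg⟩ hJtop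
      have h1 : algebraMap A A' p ∈ I.map (algebraMap A A') := Ideal.mem_map_of_mem _ hpI
      rw [hIfac', hH'eq] at h1
      rw [pow_two]
      exact Ideal.mul_mono hJle hH'le h1
end

section
/- Let A be a Marot commutative ring. Then A is a Dedekind ring (i.e., every regular ideal of A is a product of prime ideals) if and only if A is a regular-Noetherian ISP-ring (i.e., an ISP-ring in which every regular ideal is finitely generated). -/
/-!
Suppose every regular ideal is a product of primes. If a regular prime `Q` is invertible and
`a ∉ Q`, then reducing modulo `Q` and using uniqueness of factorisations into invertible primes
gives `(Q + (a))² = Q + (a²)`, whence `Q ⊆ Q (Q + (a))`; cancelling `Q` shows `Q + (a) = A`, so `Q`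
is maximal. A regular prime `P` contains such a `Q` (a factor of `(x)` for a regular `x ∈ P`), hence
equals it, so regular primes are invertible and regular ideals are finitely generated; a prime
factorisation is an ISP-factorisation with invertible part `A`.

Conversely, let `M` be a regular maximal ideal of a regular-Noetherian Marot ISP-ring. The Marot
property gives a regular `x ∈ M \ M²`, and the ISP-factorisation of `(x) + M²` forces
`(x) + M² = M`. Nakayama then yields `r ≡ 1 mod M` with `r M ⊆ (x)`, so `r / x ∈ M⁻¹` and `M` is
invertible. A maximal regular ideal `J` without prime factorisation would lie in such an `M` and
satisfy `J = M C` with `J ⊊ C`, a contradiction.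
-/

open IsLocalization

namespace Ideal

variable {R : Type*} [CommRing R]

theorem IsRegularIdeal.mono {I J : Ideal R} (hI : I.IsRegularIdeal) (h : I ≤ J) :
    J.IsRegularIdeal :=
  let ⟨a, haI, ha⟩ := hI
  ⟨a, h haI, ha⟩

theorem isRegularIdeal_span_singleton {x : R} (hx : x ∈ nonZeroDivisors R) :
    (span {x}).IsRegularIdeal :=
  ⟨x, mem_span_singleton_self x, hx⟩

theorem isInvertibleIdeal_top : (⊤ : Ideal R).IsInvertibleIdeal :=
  ⟨⟨1, Submodule.mem_top, one_mem _⟩, ⟨{1}, by simp⟩, fun _ _ => by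
    rw [map_top]
    infer_instance⟩

theorem eq_top_of_eq_mul_of_fg {I J : Ideal R} (hfg : J.FG) (hreg : J.IsRegularIdeal)
    (h : J = I * J) : I = ⊤ := by
  obtain ⟨r, hr1, hr0⟩ :=
    Submodule.exists_sub_one_mem_and_smul_eq_zero_of_fg_of_le_smul I J hfg h.le
  obtain ⟨a, haJ, ha⟩ := hreg
  have hr : r = 0 := mem_nonZeroDivisors_iff_right.mp ha r (hr0 a haJ)
  rw [eq_top_iff_one]
  simpa [hr] using I.neg_mem hr1

theorem induction_on_regular (hfg : ∀ I : Ideal R, I.IsRegularIdeal → I.FG)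
    {p : Ideal R → Prop} (h : ∀ I, I.IsRegularIdeal → (∀ J, I < J → p J) → p I) {I : Ideal R}
    (hI : I.IsRegularIdeal) : p I := by
  by_contra hpI
  set S := {J : Ideal R | J.IsRegularIdeal ∧ ¬p J}
  have hchain : ∀ c ⊆ S, IsChain (· ≤ ·) c → ∀ J ∈ c, ∃ K ∈ S, ∀ L ∈ c, L ≤ K := by
    intro c hc hchain J hJc
    -- `sSup c` is finitely generated, hence compact, so it is attained in the chain
    obtain ⟨K, hKc, hK⟩ := (CompleteLattice.isCompactElement_iff_le_of_directed_sSup_le _ _).mp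
      ((Submodule.fg_iff_compact _).mp (hfg _ ((hc hJc).1.mono (le_sSup hJc))))
      c ⟨J, hJc⟩ hchain.directedOn le_rfl
    exact ⟨K, hc hKc, fun L hL => (le_sSup hL).trans hK⟩
  obtain ⟨J, -, hJ⟩ := zorn_le_nonempty₀ S hchain I ⟨hI, hpI⟩
  refine hJ.prop.2 (h J hJ.prop.1 fun K hJK => ?_)
  by_contra hK
  exact hJK.not_ge (hJ.le_of_ge ⟨hJ.prop.1.mono hJK.le, hK⟩ hJK.le)

theorem IsPrime.le_mul_sup_span_of_sq_eq {P : Ideal R} (hP : P.IsPrime) {a : R} (ha : a ∉ P)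
    (h : (P ⊔ span {a}) ^ 2 = P ⊔ span {a ^ 2}) : P ≤ P * (P ⊔ span {a}) := by
  intro q hq
  have hsq : (P ⊔ span {a}) ^ 2 ≤ P * (P ⊔ span {a}) ⊔ span {a ^ 2} := by
    rw [sq, sup_mul]
    refine sup_le le_sup_left ?_
    rw [Ideal.mul_sup (span {a}) P, span_singleton_mul_span_singleton, ← sq, mul_comm]
    exact sup_le_sup_right (mul_mono_right le_sup_right) _
  obtain ⟨u, hu, v, hv, rfl⟩ := Submodule.mem_sup.mp (hsq (h ▸ mem_sup_left hq))
  obtain ⟨c, rfl⟩ := mem_span_singleton'.mp hv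
  have hc : c ∈ P := by
    have : c * a ^ 2 ∈ P := by simpa using P.sub_mem hq (mul_le_left hu)
    exact (hP.mem_or_mem this).resolve_right (ha ∘ hP.mem_of_pow_mem 2)
  refine add_mem hu ?_
  rw [sq, ← mul_assoc]
  exact mul_mem_mul (P.mul_mem_right a hc) (mem_sup_right (mem_span_singleton_self a))

theorem exists_mem_nonZeroDivisors_notMem (hmarot : IsMarotRing R) {I J : Ideal R}
    (hI : I.IsRegularIdeal) (hIJ : ¬I ≤ J) :
    ∃ x ∈ I, x ∈ nonZeroDivisors R ∧ x ∉ J := by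
  by_contra! h
  exact hIJ (hmarot I hI ▸ span_le.mpr fun x hx => h x hx.1 hx.2)

theorem le_of_mul_self_le {M H : Ideal R} (hM : M.IsMaximal) (hH : H ≠ ⊤) (hMH : M * M ≤ H) :
    H ≤ M := by
  obtain ⟨N, hN, hHN⟩ := exists_le_maximal H hH
  have hMN : M ≤ N := fun m hm =>
    hN.isPrime.mem_of_pow_mem 2 (hHN (hMH (sq m ▸ mul_mem_mul hm hm)))
  exact hHN.trans (hM.eq_of_le hN.ne_top hMN).ge

theorem eq_or_le_mul_self_of_hasISPFactorization {M I : Ideal R} (hM : M.IsMaximal)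
    (hI : I.HasISPFactorization) (hMI : M * M ≤ I) : I = M ∨ I ≤ M * M := by
  obtain ⟨J, L, -, hL, hH, rfl⟩ := hI
  have hLM : ∀ H ∈ L, H = M := by
    intro H hHL
    have hMH : M * M ≤ H := hMI.trans (mul_le_right.trans (le_of_dvd (List.dvd_prod hHL)))
    refine le_antisymm (le_of_mul_self_le hM (hH H hHL).1 hMH) ?_
    rwa [← (hH H hHL).2.radical_le_iff, radical_mul, hM.isPrime.radical, inf_idem] at hMH
  obtain ⟨n, hn⟩ := Nat.exists_eq_add_one_of_ne_zero (List.length_pos_iff.mpr hL).ne'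
  rw [List.prod_eq_pow_card L M hLM, hn, pow_succ'] at hMI ⊢
  rcases eq_or_ne J ⊤ with rfl | hJ
  · rcases n with _ | n
    · simp
    · rw [top_mul, pow_succ']
      exact Or.inr (mul_mono_right mul_le_left)
  · exact Or.inr (mul_le_mul' (le_of_mul_self_le hM hJ (hMI.trans mul_le_left)) mul_le_left)

variable {K : Type*} [CommRing K] [Algebra R K]

theorem isUnit_coeSubmodule_of_dvd {I J : Ideal R} (h : I ∣ J)
    (hJ : IsUnit (coeSubmodule K J)) : IsUnit (coeSubmodule K I) := by
  obtain ⟨C, rfl⟩ := h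
  rw [coeSubmodule_mul] at hJ
  exact isUnit_of_mul_isUnit_left hJ

variable [IsFractionRing R K]

theorem isUnit_coeSubmodule_span_singleton {x : R} (hx : x ∈ nonZeroDivisors R) :
    IsUnit (coeSubmodule K (span {x})) := by
  rw [coeSubmodule_span_singleton]
  exact (IsLocalization.map_units K ⟨x, hx⟩).map (Submodule.spanSingleton R)

theorem mul_left_cancel_of_isUnit {I J J' : Ideal R} (hI : IsUnit (coeSubmodule K I))
    (h : I * J = I * J') : J = J' := by
  apply coeSubmodule_injective K le_rfl
  rw [← hI.mul_right_inj, ← coeSubmodule_mul, ← coeSubmodule_mul, h]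

theorem dvd_of_le_of_isUnit {I J : Ideal R} (hI : IsUnit (coeSubmodule K I)) (h : J ≤ I) :
    I ∣ J := by
  set T : Submodule R K := ↑hI.unit⁻¹ * coeSubmodule K J
  have hT : T ≤ 1 :=
    calc T ≤ ↑hI.unit⁻¹ * coeSubmodule K I := mul_le_mul_right (coeSubmodule_mono K h) _
      _ = 1 := hI.unit.inv_mul
  refine ⟨Submodule.comap (Algebra.linearMap R K) T, coeSubmodule_injective K le_rfl ?_⟩
  have hC : coeSubmodule K (Submodule.comap (Algebra.linearMap R K) T) = T := by
    refine le_antisymm (Submodule.map_comap_le _ _) fun y hy => ?_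
    obtain ⟨a, rfl⟩ := Submodule.mem_one.mp (hT hy)
    exact ⟨a, hy, rfl⟩
  rw [coeSubmodule_mul, hC, ← mul_assoc, IsUnit.mul_val_inv, one_mul]

-- `r / x` lies in `1 / I`, and `1 = x (r / x) - (r - 1)` exhibits `1 ∈ I (1 / I)`.
theorem isUnit_coeSubmodule_of_mul_mem_span {I : Ideal R} {x r : R}
    (hx : x ∈ nonZeroDivisors R) (hxI : x ∈ I) (hr : r - 1 ∈ I)
    (hrI : ∀ a ∈ I, r * a ∈ span {x}) : IsUnit (coeSubmodule K I) := by
  have hu := IsLocalization.map_units K ⟨x, hx⟩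
  set y : K := algebraMap R K r * ↑hu.unit⁻¹
  have hy : y ∈ 1 / coeSubmodule K I := by
    rintro _ ⟨a, ha, rfl⟩
    obtain ⟨c, hc⟩ := mem_span_singleton'.mp (hrI a ha)
    refine Submodule.mem_one.mpr ⟨c, ?_⟩
    rw [Algebra.linearMap_apply, mul_right_comm, ← map_mul, ← hc, map_mul, mul_assoc,
      hu.mul_val_inv, mul_one]
  refine .of_mul_eq_one (1 / coeSubmodule K I)
    (le_antisymm Submodule.mul_one_div_le_one (Submodule.one_le.mpr ?_))
  have h1 : (1 : K) = algebraMap R K x * y - algebraMap R K (r - 1) * 1 := by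
    rw [mul_left_comm, hu.mul_val_inv, map_sub, map_one]
    ring
  rw [h1]
  refine Submodule.sub_mem _ (Submodule.mul_mem_mul ⟨x, hxI, rfl⟩ hy)
    (Submodule.mul_mem_mul ⟨r - 1, hr, rfl⟩ (Submodule.one_mem_div.mpr ?_))
  rintro _ ⟨a, -, rfl⟩
  exact Submodule.mem_one.mpr ⟨a, rfl⟩

open Pointwise in
theorem IsMaximal.isUnit_coeSubmodule (hmarot : IsMarotRing R) (hisp : IsISPRing R)
    {M : Ideal R} (hM : M.IsMaximal) (hreg : M.IsRegularIdeal) (hfg : M.FG) :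
    IsUnit (coeSubmodule K M) := by
  obtain ⟨x, hxM, hx, hxMM⟩ := exists_mem_nonZeroDivisors_notMem hmarot hreg fun h =>
    hM.ne_top (eq_top_of_eq_mul_of_fg hfg hreg (le_antisymm h mul_le_right))
  set I := span {x} ⊔ M * M
  have hIM : I ≤ M := sup_le (span_le.mpr (Set.singleton_subset_iff.mpr hxM)) mul_le_right
  have hI : I = M :=
    (eq_or_le_mul_self_of_hasISPFactorization hM
      (hisp I (ne_top_of_le_ne_top hM.ne_top hIM)
        ((isRegularIdeal_span_singleton hx).mono le_sup_left)) le_sup_right).resolve_right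
      fun h => hxMM (h (mem_sup_left (mem_span_singleton_self x)))
  obtain ⟨r, hr, hrM⟩ :=
    Submodule.exists_sub_one_mem_and_smul_le_of_fg_of_le_sup hfg le_rfl hI.ge
  exact isUnit_coeSubmodule_of_mul_mem_span hx hxM hr fun a ha =>
    hrM (Submodule.smul_mem_pointwise_smul a r M ha)

theorem multiset_eq_of_prod_eq {s t : Multiset (Ideal R)}
    (hs : ∀ P ∈ s, P.IsPrime ∧ IsUnit (coeSubmodule K P)) (ht : ∀ Q ∈ t, Q.IsPrime)
    (h : s.prod = t.prod) : s = t := by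
  classical
  induction s using Multiset.strongInductionOn generalizing t with
  | ih s ih =>
  rcases s.empty_or_exists_mem with rfl | ⟨P₀, hP₀⟩
  · refine (Multiset.eq_zero_of_forall_notMem fun Q hQ => (ht Q hQ).ne_top ?_).symm
    rw [eq_top_iff, ← one_eq_top, ← Multiset.prod_zero, h]
    exact le_of_dvd (Multiset.dvd_prod hQ)
  -- a minimal factor `P` of `s` is also a factor of `t`, and can be cancelled
  obtain ⟨P, hPmin⟩ := s.finite_toSet.exists_minimal ⟨P₀, hP₀⟩
  have hPs : P ∈ s := hPmin.prop
  obtain ⟨Q, hQt, hQP⟩ :=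
    (hs P hPs).1.multiset_prod_le.mp (h ▸ le_of_dvd (Multiset.dvd_prod hPs))
  obtain ⟨P', hP's, hP'Q⟩ :=
    ((ht Q hQt).multiset_prod_le).mp (h.symm ▸ le_of_dvd (Multiset.dvd_prod hQt))
  have hQ : Q = P := le_antisymm hQP (hPmin.le_of_le hP's (hP'Q.trans hQP) |>.trans hP'Q)
  subst hQ
  have herase : (s.erase Q).prod = (t.erase Q).prod := by
    refine mul_left_cancel_of_isUnit (hs Q hPs).2 ?_
    rw [Multiset.prod_erase hPs, Multiset.prod_erase hQt, h]
  rw [← Multiset.cons_erase hPs, ← Multiset.cons_erase hQt,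
    ih _ (Multiset.erase_lt.mpr hPs) (fun X hX => hs X (Multiset.mem_of_mem_erase hX))
      (fun X hX => ht X (Multiset.mem_of_mem_erase hX)) herase]

theorem multiset_eq_of_map_mk_prod_eq {P : Ideal R} {s t : Multiset (Ideal R)}
    (hs : ∀ Q ∈ s, Q.IsPrime ∧ P ≤ Q) (ht : ∀ Q ∈ t, Q.IsPrime ∧ P ≤ Q)
    (hunit : IsUnit (coeSubmodule (FractionRing (R ⧸ P)) (s.prod.map (Quotient.mk P))))
    (h : s.prod.map (Quotient.mk P) = t.prod.map (Quotient.mk P)) : s = t := by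
  have hprod (u : Multiset (Ideal R)) :
      (u.map (map (Quotient.mk P))).prod = u.prod.map (Quotient.mk P) :=
    (map_multiset_prod (mapHom (Quotient.mk P)) u).symm
  have hprime {u : Multiset (Ideal R)} (hu : ∀ Q ∈ u, Q.IsPrime ∧ P ≤ Q) :
      ∀ Q ∈ u.map (map (Quotient.mk P)), Q.IsPrime := by
    simp only [Multiset.mem_map]
    rintro _ ⟨Q, hQ, rfl⟩
    have : Q.IsPrime := (hu Q hQ).1
    exact isPrime_map_quotientMk_of_isPrime (hu Q hQ).2
  have hcomap {u : Multiset (Ideal R)} (hu : ∀ Q ∈ u, Q.IsPrime ∧ P ≤ Q) :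
      (u.map (map (Quotient.mk P))).map (comap (Quotient.mk P)) = u := by
    rw [Multiset.map_map]
    exact (Multiset.map_congr rfl fun Q hQ => comap_map_mk (hu Q hQ).2).trans u.map_id
  have hs' : ∀ Q ∈ s.map (map (Quotient.mk P)),
      Q.IsPrime ∧ IsUnit (coeSubmodule (FractionRing (R ⧸ P)) Q) := fun Q hQ =>
    ⟨hprime hs Q hQ, isUnit_coeSubmodule_of_dvd (hprod s ▸ Multiset.dvd_prod hQ) hunit⟩
  rw [← hcomap hs, ← hcomap ht,
    multiset_eq_of_prod_eq hs' (hprime ht) (by rw [hprod, hprod, h])]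

end Ideal

/-- Every regular ideal is a product of prime ideals: the *Dedekind rings* of the paper. -/
def RegularIdealsFactorIntoPrimes (R : Type*) [CommRing R] : Prop :=
  ∀ I : Ideal R, I.IsRegularIdeal → ∃ L : List (Ideal R), (∀ P ∈ L, P.IsPrime) ∧ I = L.prod

namespace RegularIdealsFactorIntoPrimes

open Ideal

variable {R : Type*} [CommRing R]

theorem sup_span_sq (hR : RegularIdealsFactorIntoPrimes R) {P : Ideal R} [P.IsPrime]
    (hP : P.IsRegularIdeal) {a : R} (ha : a ∉ P) :
    (P ⊔ span {a}) ^ 2 = P ⊔ span {a ^ 2} := by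
  obtain ⟨L₁, hL₁, h₁⟩ := hR _ (hP.mono (le_sup_left : P ≤ P ⊔ span {a}))
  obtain ⟨L₂, hL₂, h₂⟩ := hR _ (hP.mono (le_sup_left : P ≤ P ⊔ span {a ^ 2}))
  have hfactor {I : Ideal R} {L : List (Ideal R)} (hL : ∀ Q ∈ L, Q.IsPrime) (hI : I = L.prod)
      (hPI : P ≤ I) : ∀ Q ∈ (L : Multiset (Ideal R)), Q.IsPrime ∧ P ≤ Q := fun Q hQ =>
    ⟨hL Q hQ, hPI.trans (hI ▸ le_of_dvd (List.dvd_prod hQ))⟩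
  have hmap (b : R) :
      (P ⊔ span {b}).map (Ideal.Quotient.mk P) = span {Ideal.Quotient.mk P b} := by
    rw [Ideal.map_sup, map_quotient_self, bot_sup_eq, map_span, Set.image_singleton]
  have hπa : Ideal.Quotient.mk P (a ^ 2) ∈ nonZeroDivisors (R ⧸ P) :=
    mem_nonZeroDivisors_of_ne_zero (Ideal.Quotient.eq_zero_iff_mem.not.mpr
      (fun h => ha (‹P.IsPrime›.mem_of_pow_mem 2 h)))
  have hL₁' := hfactor hL₁ h₁ le_sup_left
  have hL : (L₂ : Multiset (Ideal R)) = L₁ + L₁ := by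
    refine multiset_eq_of_map_mk_prod_eq (hfactor hL₂ h₂ le_sup_left)
      (fun Q hQ => (Multiset.mem_add.mp hQ).elim (hL₁' Q) (hL₁' Q)) ?_ ?_
    · rw [Multiset.prod_coe, ← h₂, hmap]
      exact isUnit_coeSubmodule_span_singleton hπa
    · rw [Multiset.prod_add, Multiset.prod_coe, Multiset.prod_coe, ← h₂, ← h₁, ← sq,
        Ideal.map_pow, hmap, hmap, span_singleton_pow, map_pow]
  rw [h₁, h₂, ← Multiset.prod_coe L₂, hL, Multiset.prod_add, Multiset.prod_coe, sq]

variable {K : Type*} [CommRing K] [Algebra R K] [IsFractionRing R K]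

theorem isMaximal_of_isUnit (hR : RegularIdealsFactorIntoPrimes R) {P : Ideal R} [hP : P.IsPrime]
    (hreg : P.IsRegularIdeal) (hPK : IsUnit (coeSubmodule K P)) : P.IsMaximal := by
  refine isMaximal_iff.mpr ⟨fun h => hP.ne_top ((eq_top_iff_one _).mpr h),
    fun J a hPJ ha haJ => ?_⟩
  have htop : P ⊔ span {a} = ⊤ := by
    refine (mul_left_cancel_of_isUnit hPK ?_).symm
    rw [mul_top]
    exact le_antisymm (hP.le_mul_sup_span_of_sq_eq ha (hR.sup_span_sq hreg ha)) mul_le_left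
  exact sup_le hPJ (span_le.mpr (Set.singleton_subset_iff.mpr haJ)) (htop ▸ Submodule.mem_top)

theorem isUnit_of_isPrime (hR : RegularIdealsFactorIntoPrimes R) {P : Ideal R} (hP : P.IsPrime)
    (hreg : P.IsRegularIdeal) : IsUnit (coeSubmodule K P) := by
  obtain ⟨x, hxP, hx⟩ := hreg
  obtain ⟨L, hL, hxL⟩ := hR _ (isRegularIdeal_span_singleton hx)
  obtain ⟨Q, hQL, hQP⟩ := (hP.multiset_prod_le (s := L)).mp
    (by rw [Multiset.prod_coe, ← hxL, span_le]; simpa using hxP)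
  have hQx : Q ∣ span {x} := hxL ▸ List.dvd_prod hQL
  have hQK : IsUnit (coeSubmodule K Q) :=
    isUnit_coeSubmodule_of_dvd hQx (isUnit_coeSubmodule_span_singleton hx)
  have : Q.IsPrime := hL Q hQL
  have hQ : Q.IsMaximal :=
    hR.isMaximal_of_isUnit ((isRegularIdeal_span_singleton hx).mono (le_of_dvd hQx)) hQK
  rwa [← hQ.eq_of_le hP.ne_top hQP]

theorem fg_of_isRegularIdeal (hR : RegularIdealsFactorIntoPrimes R) {I : Ideal R}
    (hI : I.IsRegularIdeal) : I.FG := by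
  obtain ⟨L, hL, rfl⟩ := hR I hI
  refine List.prod_induction _ (fun _ _ => Submodule.FG.mul) ⟨{1}, by simp⟩ fun P hP => ?_
  refine (coeSubmodule_fg (FractionRing R) (IsFractionRing.injective R _) P).mp
    (Submodule.fg_of_isUnit (hR.isUnit_of_isPrime (hL P hP) (hI.mono (le_of_dvd ?_))))
  exact List.dvd_prod hP

theorem isISPRing (hR : RegularIdealsFactorIntoPrimes R) : IsISPRing R := by
  intro I hI hreg
  obtain ⟨L, hL, rfl⟩ := hR I hreg
  refine ⟨⊤, L, isInvertibleIdeal_top, ?_,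
    fun H hH => ⟨(hL H hH).ne_top, (hL H hH).isRadical⟩, (top_mul _).symm⟩
  rintro rfl
  exact hI (by simp)

theorem of_isMarotRing (hmarot : IsMarotRing R) (hisp : IsISPRing R)
    (hfg : ∀ I : Ideal R, I.IsRegularIdeal → I.FG) : RegularIdealsFactorIntoPrimes R := by
  intro I hI
  refine induction_on_regular hfg (fun J hJ ih => ?_) hI
    (p := fun J => ∃ L : List (Ideal R), (∀ P ∈ L, P.IsPrime) ∧ J = L.prod)
  rcases eq_or_ne J ⊤ with rfl | hJtop
  · exact ⟨[], by simp, by simp⟩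
  obtain ⟨N, hN, hJN⟩ := exists_le_maximal J hJtop
  have hNreg := hJ.mono hJN
  obtain ⟨C, rfl⟩ := dvd_of_le_of_isUnit
    (hN.isUnit_coeSubmodule (K := FractionRing R) hmarot hisp hNreg (hfg N hNreg)) hJN
  have hC := hJ.mono mul_le_right
  have hlt : N * C < C := lt_of_le_of_ne mul_le_right fun h =>
    hN.ne_top (eq_top_of_eq_mul_of_fg (hfg C hC) hC h.symm)
  obtain ⟨L, hL, rfl⟩ := ih C hlt
  exact ⟨N :: L, List.forall_mem_cons.mpr ⟨hN.isPrime, hL⟩, List.prod_cons.symm⟩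

end RegularIdealsFactorIntoPrimes

/-- A Marot ring is Dedekind (every regular ideal is a product of prime ideals) if and
only if it is a regular-Noetherian ISP-ring. -/
theorem marot_dedekind_iff_regularNoetherian_isISPRing {A : Type*} [CommRing A]
    (hmarot : IsMarotRing A) :
    (∀ I : Ideal A, I.IsRegularIdeal →
        ∃ L : List (Ideal A), (∀ P ∈ L, P.IsPrime) ∧ I = L.prod) ↔
      (IsISPRing A ∧ ∀ I : Ideal A, I.IsRegularIdeal → I.FG) :=
  ⟨fun hA => ⟨RegularIdealsFactorIntoPrimes.isISPRing hA,
      fun _ => RegularIdealsFactorIntoPrimes.fg_of_isRegularIdeal hA⟩,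
    fun ⟨hisp, hfg⟩ => RegularIdealsFactorIntoPrimes.of_isMarotRing hmarot hisp hfg⟩
end
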